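/- arXiv:2402.17036 — 2 statements merged into one kernel-verified Lean document; each statement's English description precedes it below -/
import Mathlib

section
/- With the notation of the Gauss–Newton update, the point B^{-1}( Lᵀ Q̄^{-1} m + Hᵀ R^{-1} y ) with m = L u₀ − 𝓛(u₀) is exactly the posterior mean of the Gaussian posterior obtained from the linearised prior u ~ N(L^{-1} m, (Lᵀ Q̄^{-1} L)^{-1}) and likelihood y ~ N(Hu, R). Hence the damped Gauss–Newton step for the weak-constraint 4D-Var cost coincides with the damped update u₁ = (1−γ)u₀ + γ μ_{u|y} of the linearisation point towards the Gaussian posterior mean. -/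
open Matrix

/-- The Gauss–Newton point `B⁻¹ (Lᵀ Q̄⁻¹ m + Hᵀ R⁻¹ y)` with `m = L u₀ − 𝓛(u₀)` is
exactly the posterior mean of the Gaussian posterior obtained from the linearised prior
`u ~ N(L⁻¹ m, (Lᵀ Q̄⁻¹ L)⁻¹)` and likelihood `y ~ N(Hu, R)` (which has precision `B`
and mean `μ_{u|y} = μ_u + B⁻¹ Hᵀ R⁻¹ (y − H μ_u)` with `μ_u = L⁻¹ m`); hence the damped
Gauss–Newton step coincides with the damped update `(1−γ) u₀ + γ μ_{u|y}`. -/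
theorem gauss_newton_point_eq_posterior_mean
    {d m : ℕ} (y : Fin m → ℝ) (H : Matrix (Fin m) (Fin d) ℝ)
    (R : Matrix (Fin m) (Fin m) ℝ) (Q : Matrix (Fin d) (Fin d) ℝ)
    (𝓛 : (Fin d → ℝ) → (Fin d → ℝ)) (u₀ : Fin d → ℝ)
    (L : Matrix (Fin d) (Fin d) ℝ)
    (hJac : HasFDerivAt 𝓛 (Matrix.mulVecLin L).toContinuousLinearMap u₀)
    (hR : R.PosDef) (hQ : Q.PosDef) (hL : IsUnit L.det)
    (B : Matrix (Fin d) (Fin d) ℝ) (hB : B = Hᵀ * R⁻¹ * H + Lᵀ * Q⁻¹ * L)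
    (hBinv : IsUnit B.det)
    (m' μu μpost : Fin d → ℝ)
    (hm : m' = L *ᵥ u₀ - 𝓛 u₀)
    (hμu : μu = L⁻¹ *ᵥ m')
    (hμpost : μpost = μu + B⁻¹ *ᵥ (Hᵀ *ᵥ (R⁻¹ *ᵥ (y - H *ᵥ μu))))
    (γ : ℝ) (hγ : γ ∈ Set.Ioc (0 : ℝ) 1) :
    B⁻¹ *ᵥ (Lᵀ *ᵥ (Q⁻¹ *ᵥ m') + Hᵀ *ᵥ (R⁻¹ *ᵥ y)) = μpost ∧
    (1 - γ) • u₀ + γ • (B⁻¹ *ᵥ (Lᵀ *ᵥ (Q⁻¹ *ᵥ m') + Hᵀ *ᵥ (R⁻¹ *ᵥ y))) =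
      (1 - γ) • u₀ + γ • μpost := by
  have hLμ : L *ᵥ μu = m' := by
    rw [hμu, mulVec_mulVec, mul_nonsing_inv L hL, one_mulVec]
  have hBμ : B *ᵥ μu = Hᵀ *ᵥ (R⁻¹ *ᵥ (H *ᵥ μu)) + Lᵀ *ᵥ (Q⁻¹ *ᵥ m') := by
    rw [hB, add_mulVec]
    simp [← mulVec_mulVec, hLμ]
  have hμ : μu = B⁻¹ *ᵥ (B *ᵥ μu) := by
    rw [mulVec_mulVec, nonsing_inv_mul B hBinv, one_mulVec]
  have key : B⁻¹ *ᵥ (Lᵀ *ᵥ (Q⁻¹ *ᵥ m') + Hᵀ *ᵥ (R⁻¹ *ᵥ y)) = μpost := by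
    rw [hμpost]
    nth_rewrite 1 [hμ]
    rw [← mulVec_add]
    congr 1
    rw [hBμ]
    have : R⁻¹ *ᵥ (y - H *ᵥ μu) = R⁻¹ *ᵥ y - R⁻¹ *ᵥ (H *ᵥ μu) := by
      rw [mulVec_sub]
    rw [this, mulVec_sub]
    abel
  exact ⟨key, by rw [key]⟩
end

section
/- If the damped update u^{(n+1)} = (1−γ) u^{(n)} + γ μ_{u|y}^{(n)} (with γ ∈ (0,1] and μ_{u|y}^{(n)} the Gaussian posterior mean from linearising at u^{(n)}) converges to a fixed point u^{(∞)}, then u^{(∞)} equals the posterior mean μ_{u|y}^{(∞)} computed from linearisation at u^{(∞)}, and u^{(∞)} is a stationary point of the weak-constraint 4D-Var cost J(u) = ½ (y − Hu)ᵀ R^{-1} (y − Hu) + ½ 𝓛(u)ᵀ Q̄^{-1} 𝓛(u). -/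
open Matrix Filter Topology

/-- Derivative CLM of a quadratic form `x ↦ x ⬝ᵥ M *ᵥ x` at `w`. -/
noncomputable def quadD {k : ℕ} (M : Matrix (Fin k) (Fin k) ℝ) (w : Fin k → ℝ) :
    (Fin k → ℝ) →L[ℝ] ℝ :=
  LinearMap.toContinuousLinearMap
    { toFun := fun h => w ⬝ᵥ (M *ᵥ h) + h ⬝ᵥ (M *ᵥ w)
      map_add' := by
        intro a b
        simp [Matrix.mulVec_add, add_dotProduct, dotProduct_add]
        ring
      map_smul' := by
        intro c a
        simp [Matrix.mulVec_smul, smul_dotProduct, dotProduct_smul, smul_eq_mul]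
        ring }

@[simp] lemma quadD_apply {k : ℕ} (M : Matrix (Fin k) (Fin k) ℝ) (w h : Fin k → ℝ) :
    quadD M w h = w ⬝ᵥ (M *ᵥ h) + h ⬝ᵥ (M *ᵥ w) := rfl

lemma hasFDerivAt_quad {k : ℕ} (M : Matrix (Fin k) (Fin k) ℝ) (w : Fin k → ℝ) :
    HasFDerivAt (fun x : Fin k → ℝ => x ⬝ᵥ (M *ᵥ x)) (quadD M w) w := by
  have key : ∀ i : Fin k, HasFDerivAt (fun x : Fin k → ℝ => x i * (M *ᵥ x) i)
      (w i • ((ContinuousLinearMap.proj i).comp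
          (LinearMap.toContinuousLinearMap (Matrix.mulVecLin M)))
        + (M *ᵥ w) i • (ContinuousLinearMap.proj (R := ℝ) (φ := fun _ : Fin k => ℝ) i)) w := by
    intro i
    have h1 : HasFDerivAt (fun x : Fin k → ℝ => x i)
        (ContinuousLinearMap.proj (R := ℝ) (φ := fun _ : Fin k => ℝ) i) w := by
      exact (ContinuousLinearMap.proj (R := ℝ) (φ := fun _ : Fin k => ℝ) i).hasFDerivAt (x := w)
    have h2 : HasFDerivAt (fun x : Fin k → ℝ => (M *ᵥ x) i)
        ((ContinuousLinearMap.proj i).comp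
          (LinearMap.toContinuousLinearMap (Matrix.mulVecLin M))) w := by
      exact ((ContinuousLinearMap.proj (R := ℝ) (φ := fun _ : Fin k => ℝ) i).comp
          (LinearMap.toContinuousLinearMap (Matrix.mulVecLin M))).hasFDerivAt (x := w)
    exact h1.mul h2
  have hsum := HasFDerivAt.fun_sum (fun i (_ : i ∈ Finset.univ) => key i)
  have hfun : (fun x : Fin k → ℝ => ∑ i : Fin k, x i * (M *ᵥ x) i)
      = fun x : Fin k → ℝ => x ⬝ᵥ (M *ᵥ x) := by
    funext x; rfl
  rw [hfun] at hsum
  refine hsum.congr_fderiv ?_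
  ext h
  simp [dotProduct, Finset.sum_add_distrib, mul_comm]

lemma dot_symm_of_transpose {k : ℕ} (M : Matrix (Fin k) (Fin k) ℝ) (hM : Mᵀ = M)
    (a b : Fin k → ℝ) : a ⬝ᵥ M *ᵥ b = b ⬝ᵥ M *ᵥ a := by
  rw [dotProduct_mulVec, ← mulVec_transpose, hM, dotProduct_comm]

lemma dot_mulVec_move {k l : ℕ} (A : Matrix (Fin k) (Fin l) ℝ) (h : Fin l → ℝ)
    (z : Fin k → ℝ) : (A *ᵥ h) ⬝ᵥ z = h ⬝ᵥ (Aᵀ *ᵥ z) := by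
  rw [dotProduct_comm, dotProduct_mulVec, ← mulVec_transpose, dotProduct_comm]

/-- If the damped iterated-INLA update `u^{(n+1)} = (1−γ) u^{(n)} + γ μ^{(n)}` (with
`μ^{(n)}` the Gaussian posterior mean obtained from linearising `𝓛` at `u^{(n)}`)
converges to `ustar`, then `ustar` is a fixed point (it equals the posterior mean from
linearisation at `ustar`) and `ustar` is a stationary point of the weak-constraint 4D-Var
cost `J(u) = ½ (y − Hu)ᵀ R⁻¹ (y − Hu) + ½ 𝓛(u)ᵀ Q̄⁻¹ 𝓛(u)`. -/
theorem damped_update_limit_is_stationary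
    {d m N : ℕ} (y : Fin m → ℝ) (H : Matrix (Fin m) (Fin d) ℝ)
    (R : Matrix (Fin m) (Fin m) ℝ) (Q : Matrix (Fin N) (Fin N) ℝ)
    (hR : R.PosDef) (hQ : Q.PosDef)
    (𝓛 : (Fin d → ℝ) → (Fin N → ℝ))
    (L : (Fin d → ℝ) → Matrix (Fin N) (Fin d) ℝ)
    (hJac : ∀ v, HasFDerivAt 𝓛 (Matrix.mulVecLin (L v)).toContinuousLinearMap v)
    (hLcont : Continuous L)
    (B : (Fin d → ℝ) → Matrix (Fin d) (Fin d) ℝ)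
    (hB : ∀ v, B v = Hᵀ * R⁻¹ * H + (L v)ᵀ * Q⁻¹ * (L v))
    (hBinv : ∀ v, IsUnit (B v).det)
    (hBbdd : ∃ C : ℝ, ∀ v x, ‖(B v)⁻¹ *ᵥ x‖ ≤ C * ‖x‖)
    (μ : (Fin d → ℝ) → (Fin d → ℝ))
    (hμ : ∀ v, μ v = (B v)⁻¹ *ᵥ ((L v)ᵀ *ᵥ (Q⁻¹ *ᵥ (L v *ᵥ v - 𝓛 v)) + Hᵀ *ᵥ (R⁻¹ *ᵥ y)))
    (γ : ℝ) (hγ : γ ∈ Set.Ioc (0 : ℝ) 1)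
    (u : ℕ → (Fin d → ℝ))
    (hiter : ∀ n, u (n + 1) = (1 - γ) • u n + γ • μ (u n))
    (ustar : Fin d → ℝ) (hconv : Tendsto u atTop (𝓝 ustar))
    (J : (Fin d → ℝ) → ℝ)
    (hJ : ∀ v, J v = (1/2) * ((y - H *ᵥ v) ⬝ᵥ (R⁻¹ *ᵥ (y - H *ᵥ v)))
        + (1/2) * (𝓛 v ⬝ᵥ (Q⁻¹ *ᵥ 𝓛 v))) :
    ustar = μ ustar ∧ fderiv ℝ J ustar = 0 := by
  obtain ⟨hγ0, hγ1⟩ := hγ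
  have h𝓛cont : Continuous 𝓛 := by
    rw [continuous_iff_continuousAt]; exact fun v => (hJac v).continuousAt
  -- the common right-hand side
  have hBμ : ∀ v, B v *ᵥ μ v
      = (L v)ᵀ *ᵥ (Q⁻¹ *ᵥ (L v *ᵥ v - 𝓛 v)) + Hᵀ *ᵥ (R⁻¹ *ᵥ y) := by
    intro v
    rw [hμ v, Matrix.mulVec_mulVec, Matrix.mul_nonsing_inv _ (hBinv v), Matrix.one_mulVec]
  -- μ (u n) → ustar
  have hμlim : Tendsto (fun n => μ (u n)) atTop (𝓝 ustar) := by
    have h1 : Tendsto (fun n => u (n + 1)) atTop (𝓝 ustar) :=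
      hconv.comp (tendsto_add_atTop_nat 1)
    have h2 : (fun n => μ (u n)) = fun n => γ⁻¹ • (u (n + 1) - (1 - γ) • u n) := by
      funext n
      rw [hiter n, add_sub_cancel_left, smul_smul, inv_mul_cancel₀ hγ0.ne', one_smul]
    rw [h2]
    have h3 : Tendsto (fun n => γ⁻¹ • (u (n + 1) - (1 - γ) • u n)) atTop
        (𝓝 (γ⁻¹ • (ustar - (1 - γ) • ustar))) :=
      (h1.sub (hconv.const_smul _)).const_smul _
    have h4 : γ⁻¹ • (ustar - (1 - γ) • ustar) = ustar := by
      funext i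
      simp only [Pi.smul_apply, Pi.sub_apply, smul_eq_mul]
      field_simp
      ring
    rwa [h4] at h3
  -- continuity of B
  have hBcont : Continuous B := by
    have hBfun : B = fun v => Hᵀ * R⁻¹ * H + (L v)ᵀ * Q⁻¹ * (L v) := funext hB
    rw [hBfun]
    exact continuous_const.add
      ((hLcont.matrix_transpose.matrix_mul continuous_const).matrix_mul hLcont)
  -- limit of B(u n) *ᵥ μ(u n)
  have hstar : B ustar *ᵥ ustar
      = (L ustar)ᵀ *ᵥ (Q⁻¹ *ᵥ (L ustar *ᵥ ustar - 𝓛 ustar)) + Hᵀ *ᵥ (R⁻¹ *ᵥ y) := by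
    have hBlim : Tendsto (fun n => B (u n)) atTop (𝓝 (B ustar)) :=
      (hBcont.tendsto ustar).comp hconv
    have ha : Tendsto (fun n => B (u n) *ᵥ μ (u n)) atTop (𝓝 (B ustar *ᵥ ustar)) := by
      rw [tendsto_pi_nhds]
      intro i
      simp only [Matrix.mulVec, dotProduct]
      refine tendsto_finset_sum _ (fun j _ => Tendsto.mul ?_ ?_)
      · exact ((continuous_apply _).comp (continuous_apply _)).continuousAt.tendsto.comp hBlim
      · exact ((continuous_apply j).tendsto ustar).comp hμlim
    have hrhscont : Continuous fun v =>
        (L v)ᵀ *ᵥ (Q⁻¹ *ᵥ (L v *ᵥ v - 𝓛 v)) + Hᵀ *ᵥ (R⁻¹ *ᵥ y) :=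
      (hLcont.matrix_transpose.matrix_mulVec
        (continuous_const.matrix_mulVec ((hLcont.matrix_mulVec continuous_id).sub
          h𝓛cont))).add continuous_const
    have hb : Tendsto (fun n => B (u n) *ᵥ μ (u n)) atTop
        (𝓝 ((L ustar)ᵀ *ᵥ (Q⁻¹ *ᵥ (L ustar *ᵥ ustar - 𝓛 ustar)) + Hᵀ *ᵥ (R⁻¹ *ᵥ y))) := by
      simp only [hBμ]
      exact (hrhscont.tendsto ustar).comp hconv
    exact tendsto_nhds_unique ha hb
  -- fixed point
  have hfix : ustar = μ ustar := by
    rw [hμ ustar, ← hstar, Matrix.mulVec_mulVec, Matrix.nonsing_inv_mul _ (hBinv ustar),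
      Matrix.one_mulVec]
  refine ⟨hfix, ?_⟩
  -- key stationarity identity
  have keyv : (L ustar)ᵀ *ᵥ (Q⁻¹ *ᵥ 𝓛 ustar) = Hᵀ *ᵥ (R⁻¹ *ᵥ (y - H *ᵥ ustar)) := by
    have h := hstar
    rw [hB ustar] at h
    simp only [Matrix.add_mulVec, ← Matrix.mulVec_mulVec, Matrix.mulVec_sub] at h ⊢
    funext i
    have h' := congrFun h i
    simp only [Pi.add_apply, Pi.sub_apply] at h' ⊢
    linarith
  -- symmetry of inverses
  have hRsym : (R⁻¹)ᵀ = R⁻¹ := by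
    rw [Matrix.transpose_nonsing_inv]
    congr 1
    have h := hR.1.eq
    rwa [Matrix.conjTranspose_eq_transpose_of_trivial] at h
  have hQsym : (Q⁻¹)ᵀ = Q⁻¹ := by
    rw [Matrix.transpose_nonsing_inv]
    congr 1
    have h := hQ.1.eq
    rwa [Matrix.conjTranspose_eq_transpose_of_trivial] at h
  -- derivative of the two pieces
  have hw : HasFDerivAt (fun v : Fin d → ℝ => y - H *ᵥ v)
      (-(LinearMap.toContinuousLinearMap (Matrix.mulVecLin H))) ustar := by
    have hlin := (LinearMap.toContinuousLinearMap (Matrix.mulVecLin H)).hasFDerivAt (x := ustar)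
    simpa using hlin.const_sub y
  have hq1 : HasFDerivAt (fun v : Fin d → ℝ => (y - H *ᵥ v) ⬝ᵥ (R⁻¹ *ᵥ (y - H *ᵥ v)))
      ((quadD R⁻¹ (y - H *ᵥ ustar)).comp
        (-(LinearMap.toContinuousLinearMap (Matrix.mulVecLin H)))) ustar :=
    (hasFDerivAt_quad R⁻¹ (y - H *ᵥ ustar)).comp (f := fun v : Fin d → ℝ => y - H *ᵥ v) ustar hw
  have hq2 : HasFDerivAt (fun v : Fin d → ℝ => 𝓛 v ⬝ᵥ (Q⁻¹ *ᵥ 𝓛 v))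
      ((quadD Q⁻¹ (𝓛 ustar)).comp
        (Matrix.mulVecLin (L ustar)).toContinuousLinearMap) ustar :=
    (hasFDerivAt_quad Q⁻¹ (𝓛 ustar)).comp ustar (hJac ustar)
  have hJD : HasFDerivAt J
      ((1/2 : ℝ) • ((quadD R⁻¹ (y - H *ᵥ ustar)).comp
          (-(LinearMap.toContinuousLinearMap (Matrix.mulVecLin H))))
        + (1/2 : ℝ) • ((quadD Q⁻¹ (𝓛 ustar)).comp
          (Matrix.mulVecLin (L ustar)).toContinuousLinearMap)) ustar := by
    have hJfun : J = fun v => (1/2) * ((y - H *ᵥ v) ⬝ᵥ (R⁻¹ *ᵥ (y - H *ᵥ v)))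
        + (1/2) * (𝓛 v ⬝ᵥ (Q⁻¹ *ᵥ 𝓛 v)) := funext hJ
    rw [hJfun]
    exact (hq1.const_mul (1/2)).add (hq2.const_mul (1/2))
  rw [hJD.fderiv]
  ext h
  simp only [ContinuousLinearMap.add_apply, ContinuousLinearMap.coe_smul', Pi.smul_apply,
    ContinuousLinearMap.comp_apply, ContinuousLinearMap.neg_apply,
    LinearMap.coe_toContinuousLinearMap', Matrix.mulVecLin_apply, quadD_apply,
    ContinuousLinearMap.zero_apply, smul_eq_mul]
  have e1 : (y - H *ᵥ ustar) ⬝ᵥ (R⁻¹ *ᵥ (-(H *ᵥ h)))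
      = (-(H *ᵥ h)) ⬝ᵥ (R⁻¹ *ᵥ (y - H *ᵥ ustar)) :=
    dot_symm_of_transpose R⁻¹ hRsym _ _
  have e2 : 𝓛 ustar ⬝ᵥ (Q⁻¹ *ᵥ (L ustar *ᵥ h))
      = (L ustar *ᵥ h) ⬝ᵥ (Q⁻¹ *ᵥ 𝓛 ustar) :=
    dot_symm_of_transpose Q⁻¹ hQsym _ _
  rw [e1, e2]
  have e3 : (-(H *ᵥ h)) ⬝ᵥ (R⁻¹ *ᵥ (y - H *ᵥ ustar))
      = -(h ⬝ᵥ (Hᵀ *ᵥ (R⁻¹ *ᵥ (y - H *ᵥ ustar)))) := by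
    rw [neg_dotProduct, dot_mulVec_move]
  have e4 : (L ustar *ᵥ h) ⬝ᵥ (Q⁻¹ *ᵥ 𝓛 ustar)
      = h ⬝ᵥ ((L ustar)ᵀ *ᵥ (Q⁻¹ *ᵥ 𝓛 ustar)) := dot_mulVec_move _ _ _
  rw [e3, e4, keyv]
  ring
end
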